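/- Let $G$ be a finite group acting on a finite-dimensional module $V$ over a field $F$, and let $V_0 := \{ v \in V : f(v) = 0 \text{ for all } f \in (V^*)^G \}$ be the common zero set of the linear invariants. Then $V_0$ is a $G$-submodule of $V$, and $\delta(G,V) = 1$ if and only if $V^G \neq \{0\}$ and $V^G \cap V_0 = \{0\}$. -/

import Mathlib

open MvPolynomial

/-- The action of a matrix `A` on polynomials, substituting each variable `X i`
by the linear form `∑ j, A i j • X j`, so that `(matAct A f)(v) = f(A ⬝ v)`. -/
noncomputable def matAct {F : Type*} [Field F] {N : ℕ} (A : Matrix (Fin N) (Fin N) F) :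
    MvPolynomial (Fin N) F →ₐ[F] MvPolynomial (Fin N) F :=
  aeval fun i => ∑ j, C (A i j) * X j

/-- `f` is an invariant of the representation `ρ`: `σ(f) = f ∘ σ⁻¹ = f` for all `σ ∈ G`. -/
def IsInv {F : Type*} [Field F] {N : ℕ} {G : Type*} [Group G]
    (ρ : G →* Matrix.GeneralLinearGroup (Fin N) F) (f : MvPolynomial (Fin N) F) : Prop :=
  ∀ σ : G, matAct ((ρ σ⁻¹ : Matrix.GeneralLinearGroup (Fin N) F) : Matrix (Fin N) (Fin N) F) f = f

/-- `v` is a fixed point of the representation `ρ`. -/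
def IsFixedPt {F : Type*} [Field F] {N : ℕ} {G : Type*} [Group G]
    (ρ : G →* Matrix.GeneralLinearGroup (Fin N) F) (v : Fin N → F) : Prop :=
  ∀ σ : G, Matrix.mulVec ((ρ σ : Matrix.GeneralLinearGroup (Fin N) F) : Matrix (Fin N) (Fin N) F) v = v

/-- `ε(G,v)`: minimal positive degree of a homogeneous invariant not vanishing at `v`. -/
noncomputable def epsGV {F : Type*} [Field F] {N : ℕ} {G : Type*} [Group G]
    (ρ : G →* Matrix.GeneralLinearGroup (Fin N) F) (v : Fin N → F) : ℕ :=
  sInf {d : ℕ | 0 < d ∧ ∃ f : MvPolynomial (Fin N) F,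
    IsInv ρ f ∧ f.IsHomogeneous d ∧ eval v f ≠ 0}

/-- `δ(G,V)`: the degree of reductivity, i.e. the supremum of `ε(G,v)` over nonzero
fixed points `v` (and `0` if `V^G = {0}`). -/
noncomputable def deltaGV {F : Type*} [Field F] {N : ℕ} {G : Type*} [Group G]
    (ρ : G →* Matrix.GeneralLinearGroup (Fin N) F) : ℕ :=
  sSup {e : ℕ | ∃ v : Fin N → F, v ≠ 0 ∧ IsFixedPt ρ v ∧ e = epsGV ρ v}

/-- `V₀`: the common zero set of the `G`-invariant linear forms. -/
def Vzero {F : Type*} [Field F] {N : ℕ} {G : Type*} [Group G]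
    (ρ : G →* Matrix.GeneralLinearGroup (Fin N) F) : Set (Fin N → F) :=
  {v | ∀ f : MvPolynomial (Fin N) F, IsInv ρ f → f.IsHomogeneous 1 → eval v f = 0}


/-!
Invariant linear forms are linear functionals fixed by `G`, so their common kernel `V₀` is a
`G`-stable subspace. For a fixed point `v`, `ε(G,v) = 1` exactly when some invariant linear form
does not vanish at `v`, i.e. `v ∉ V₀`. For finite `G` and `v ≠ 0`, the product of the `G`-orbit of
a coordinate not vanishing at `v` is an invariant of degree `|G|` not vanishing at `v`, so
`ε(G,v) ≥ 1`; hence `δ(G,V) = 1` iff the set of values `ε(G,v)` is `{1}`.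
-/

namespace Nat

theorem sInf_eq_one_iff_one_mem {S : Set ℕ} (h0 : 0 ∉ S) : sInf S = 1 ↔ 1 ∈ S := by
  refine ⟨fun h => h ▸ sInf_mem (nonempty_of_sInf_eq_succ h), fun h1 => ?_⟩
  have hne : sInf S ≠ 0 := by simp [h0, Set.nonempty_iff_ne_empty.mp ⟨1, h1⟩]
  have := Nat.sInf_le h1
  omega

theorem sSup_eq_one_iff_eq_singleton {S : Set ℕ} (h0 : 0 ∉ S) : sSup S = 1 ↔ S = {1} := by
  refine ⟨fun h => ?_, fun h => h ▸ csSup_singleton 1⟩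
  have hbdd : BddAbove S := by
    by_contra hb
    simp [sSup_of_not_bddAbove hb] at h
  have hS : S.Nonempty := by
    by_contra hS
    simp [Set.not_nonempty_iff_eq_empty.mp hS] at h
  refine Set.eq_singleton_iff_nonempty_unique_mem.mpr ⟨hS, fun e he => ?_⟩
  have : e ≤ 1 := h ▸ le_csSup hbdd he
  have : e ≠ 0 := fun h' => h0 (h' ▸ he)
  omega

end Nat

namespace MvPolynomial

theorem IsHomogeneous.exists_eval_eq_dotProduct {R σ : Type*} [CommSemiring R] [Fintype σ]
    {f : MvPolynomial σ R} (hf : f.IsHomogeneous 1) :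
    ∃ c : σ → R, ∀ v, eval v f = c ⬝ᵥ v := by
  have hspan : f ∈ Submodule.span R (Set.range X) := by
    rw [← homogeneousSubmodule_one_eq_span_X]
    exact hf
  obtain ⟨c, rfl⟩ := (Submodule.mem_span_range_iff_exists_fun R).mp hspan
  exact ⟨c, fun v => by simp [dotProduct]⟩

end MvPolynomial

section MatrixAction

variable {F : Type*} [Field F] {N : ℕ}

theorem eval_matAct (A : Matrix (Fin N) (Fin N) F) (v : Fin N → F) (f : MvPolynomial (Fin N) F) :
    eval v (matAct A f) = eval (A.mulVec v) f := by
  refine (comp_aeval_apply _ (aeval v) f).trans (congrArg (aeval · f) (funext fun i => ?_))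
  simp [Matrix.mulVec, dotProduct]

theorem matAct_matAct (A B : Matrix (Fin N) (Fin N) F) (f : MvPolynomial (Fin N) F) :
    matAct A (matAct B f) = matAct (B * A) f := by
  refine (comp_aeval_apply _ (matAct A) f).trans (congrArg (aeval · f) (funext fun i => ?_))
  simp only [matAct, map_sum, map_mul, aeval_C, aeval_X, Matrix.mul_apply, Finset.mul_sum,
    Finset.sum_mul, algebraMap_eq, mul_assoc]
  exact Finset.sum_comm

theorem MvPolynomial.IsHomogeneous.matAct (A : Matrix (Fin N) (Fin N) F)
    {f : MvPolynomial (Fin N) F} {d : ℕ} (hf : f.IsHomogeneous d) :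
    (matAct A f).IsHomogeneous d := by
  simpa only [one_mul, _root_.matAct] using hf.aeval _ fun i => IsHomogeneous.sum _ _ _ fun j _ => isHomogeneous_C_mul_X (A i j) j

end MatrixAction

section Representation

variable {F : Type*} [Field F] {N : ℕ} {G : Type*} [Group G]
  (ρ : G →* Matrix.GeneralLinearGroup (Fin N) F)

variable {ρ} in
theorem IsInv.matAct_eq {f : MvPolynomial (Fin N) F} (hf : IsInv ρ f) (σ : G) :
    matAct (ρ σ).val f = f := by
  simpa using hf σ⁻¹

variable {ρ} in
theorem IsFixedPt.eval_matAct {v : Fin N → F} (hv : IsFixedPt ρ v) (σ : G)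
    (f : MvPolynomial (Fin N) F) :
    eval v (matAct (ρ σ).val f) = eval v f := by
  rw [_root_.eval_matAct, hv σ]

theorem isInv_prod_matAct [Fintype G] (f : MvPolynomial (Fin N) F) :
    IsInv ρ (∏ σ, matAct (ρ σ).val f) := by
  intro τ
  simp_rw [map_prod, matAct_matAct, ← Units.val_mul, ← map_mul]
  exact Fintype.prod_equiv (Equiv.mulRight τ⁻¹) _ _ fun σ => rfl

theorem epsGV_pos [Fintype G] {v : Fin N → F} (hv0 : v ≠ 0) (hv : IsFixedPt ρ v) :
    0 < epsGV ρ v := by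
  obtain ⟨i, hi⟩ := Function.ne_iff.mp hv0
  have hhom : (∏ σ : G, matAct (ρ σ).val (X i)).IsHomogeneous (Fintype.card G) := by
    rw [← Finset.card_univ]
    simpa only [Finset.sum_const, smul_eq_mul, mul_one] using
      IsHomogeneous.prod _ _ (fun _ => 1) fun σ _ => (isHomogeneous_X F i).matAct _
  have hcard : Fintype.card G ∈ {d : ℕ | 0 < d ∧ ∃ f : MvPolynomial (Fin N) F,
      IsInv ρ f ∧ f.IsHomogeneous d ∧ eval v f ≠ 0} :=
    ⟨Fintype.card_pos, _, isInv_prod_matAct ρ (X i), hhom,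
      by simpa [map_prod, hv.eval_matAct] using hi⟩
  exact (Nat.sInf_mem ⟨_, hcard⟩).1

theorem epsGV_eq_one_iff (v : Fin N → F) : epsGV ρ v = 1 ↔ v ∉ Vzero ρ := by
  rw [epsGV, Nat.sInf_eq_one_iff_one_mem fun h => h.1.false]
  simp [Vzero]

def vzeroSubmodule : Submodule F (Fin N → F) where
  carrier := Vzero ρ
  add_mem' {v w} hv hw f hf h1 := by
    obtain ⟨c, hc⟩ := h1.exists_eval_eq_dotProduct
    rw [hc, dotProduct_add, ← hc, ← hc, hv f hf h1, hw f hf h1, add_zero]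
  zero_mem' f _ h1 := by
    obtain ⟨c, hc⟩ := h1.exists_eval_eq_dotProduct
    rw [hc, dotProduct_zero]
  smul_mem' a v hv f hf h1 := by
    obtain ⟨c, hc⟩ := h1.exists_eval_eq_dotProduct
    rw [hc, dotProduct_smul, ← hc, hv f hf h1, smul_zero]

theorem mulVec_mem_Vzero {v : Fin N → F} (hv : v ∈ Vzero ρ) (σ : G) :
    (ρ σ).val.mulVec v ∈ Vzero ρ := fun f hf h1 => by
  rw [← eval_matAct, hf.matAct_eq, hv f hf h1]

end Representation

theorem stmt14 {F : Type*} [Field F] {N : ℕ} {G : Type*} [Group G] [Fintype G]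
    (ρ : G →* Matrix.GeneralLinearGroup (Fin N) F) :
    (∃ W : Submodule F (Fin N → F), (W : Set (Fin N → F)) = Vzero ρ ∧
      ∀ σ : G, ∀ v ∈ W,
        Matrix.mulVec ((ρ σ : Matrix.GeneralLinearGroup (Fin N) F) : Matrix (Fin N) (Fin N) F) v ∈ W) ∧
    (deltaGV ρ = 1 ↔
      ((∃ v : Fin N → F, v ≠ 0 ∧ IsFixedPt ρ v) ∧
        ∀ v : Fin N → F, IsFixedPt ρ v → v ∈ Vzero ρ → v = 0)) := by
  refine ⟨⟨vzeroSubmodule ρ, rfl, fun σ v hv => mulVec_mem_Vzero ρ hv σ⟩, ?_⟩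
  have h0 : 0 ∉ {e | ∃ v : Fin N → F, v ≠ 0 ∧ IsFixedPt ρ v ∧ e = epsGV ρ v} := by
    rintro ⟨v, hv0, hv, he⟩
    exact (epsGV_pos ρ hv0 hv).ne he
  rw [deltaGV, Nat.sSup_eq_one_iff_eq_singleton h0, Set.eq_singleton_iff_nonempty_unique_mem]
  refine and_congr (by simp [Set.Nonempty]) ⟨?_, ?_⟩
  · intro h v hv hz
    by_contra hv0
    exact (epsGV_eq_one_iff ρ v).mp (h _ ⟨v, hv0, hv, rfl⟩) hz
  · rintro h _ ⟨v, hv0, hv, rfl⟩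
    exact (epsGV_eq_one_iff ρ v).mpr fun hz => hv0 (h v hv hz)
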